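/- Let Q be an Archimedean quadratic module of a commutative unital ℝ-algebra A. Then for all p, q ∈ Q and all ε > 0, pq + ε·1 ∈ Q. Consequently Q† is an Archimedean preordering (an Archimedean quadratic module closed under multiplication). -/

import Mathlib

/-!
Rescaling by the Archimedean bound reduces the first claim to `p` and `q` in the unit interval
`0 ≤ p, q ≤ 1` of `Q`. There `p * q = p ^ 2 * q + p * (1 - p) * q`, where `p ^ 2 * q ∈ Q` and
`2 * p * (1 - p)` lies in the unit interval again; iterating halves the error term, starting from
the explicit identity for `4 * p * q + 1`. Applied to the Archimedean quadratic module `Q†`, the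
first claim gives `x * y + ε ∈ Q†` for `x, y ∈ Q†`, and `Q†† ⊆ Q†`.
-/

section

variable {A : Type*} [CommRing A] [Algebra ℝ A]

structure IsQuadraticModule (Q : Set A) : Prop where
  one_mem : (1 : A) ∈ Q
  add_mem : ∀ x ∈ Q, ∀ y ∈ Q, x + y ∈ Q
  smul_mem : ∀ r : ℝ, 0 ≤ r → ∀ x ∈ Q, r • x ∈ Q
  sq_mul_mem : ∀ a : A, ∀ q ∈ Q, a ^ 2 * q ∈ Q

structure IsArchimedeanQuadraticModule (Q : Set A) : Prop extends IsQuadraticModule Q where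
  archimedean : ∀ a : A, ∃ l : ℝ, 0 < l ∧ l • (1 : A) - a ∈ Q ∧ l • (1 : A) + a ∈ Q

/-- The set `Q†` of the paper. -/
def Set.dagger (Q : Set A) : Set A := {a : A | ∀ ε : ℝ, 0 < ε → a + ε • (1 : A) ∈ Q}

namespace IsQuadraticModule

variable {Q : Set A}

theorem smul_one_mem (hQ : IsQuadraticModule Q) {r : ℝ} (hr : 0 ≤ r) : r • (1 : A) ∈ Q :=
  hQ.smul_mem r hr 1 hQ.one_mem

theorem mem_of_smul_mem (hQ : IsQuadraticModule Q) {r : ℝ} (hr : 0 < r) {x : A}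
    (hx : r • x ∈ Q) : x ∈ Q := by
  simpa [smul_smul, inv_mul_cancel₀ hr.ne'] using hQ.smul_mem r⁻¹ (inv_nonneg.2 hr.le) _ hx

theorem add_smul_one_mem_of_le (hQ : IsQuadraticModule Q) {x : A} {a b : ℝ}
    (hx : x + a • (1 : A) ∈ Q) (hab : a ≤ b) : x + b • (1 : A) ∈ Q := by
  have h := hQ.add_mem _ hx _ (hQ.smul_one_mem (sub_nonneg.2 hab))
  rwa [add_assoc, ← add_smul, add_sub_cancel] at h

theorem one_sub_sq_mem (hQ : IsQuadraticModule Q) {t : A} (h₁ : 1 - t ∈ Q) (h₂ : 1 + t ∈ Q) :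
    1 - t ^ 2 ∈ Q := by
  refine hQ.mem_of_smul_mem two_pos ?_
  rw [two_smul,
    show 1 - t ^ 2 + (1 - t ^ 2) = (1 - t) ^ 2 * (1 + t) + (1 + t) ^ 2 * (1 - t) by ring]
  exact hQ.add_mem _ (hQ.sq_mul_mem _ _ h₂) _ (hQ.sq_mul_mem _ _ h₁)

theorem two_mul_mul_one_sub_mem (hQ : IsQuadraticModule Q) {p : A} (hp : p ∈ Q)
    (hp' : 1 - p ∈ Q) : 2 * (p * (1 - p)) ∈ Q ∧ 1 - 2 * (p * (1 - p)) ∈ Q := by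
  have h : p * (1 - p) ∈ Q := by
    rw [show p * (1 - p) = p ^ 2 * (1 - p) + (1 - p) ^ 2 * p by ring]
    exact hQ.add_mem _ (hQ.sq_mul_mem _ _ hp') _ (hQ.sq_mul_mem _ _ hp)
  constructor
  · rw [two_mul]
    exact hQ.add_mem _ h _ h
  · rw [show 1 - 2 * (p * (1 - p)) = (1 - p) ^ 2 * 1 + p ^ 2 * 1 by ring]
    exact hQ.add_mem _ (hQ.sq_mul_mem _ _ hQ.one_mem) _ (hQ.sq_mul_mem _ _ hQ.one_mem)

theorem pow_smul_mul_add_one_mem (hQ : IsQuadraticModule Q) (n : ℕ) {p q : A} (hp : p ∈ Q)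
    (hp' : 1 - p ∈ Q) (hq : q ∈ Q) (hq' : 1 - q ∈ Q) :
    (2 ^ (n + 2) : ℝ) • (p * q) + 1 ∈ Q := by
  induction n generalizing p with
  | zero =>
    have h₁ : 1 - (1 - 2 * p) ∈ Q := by
      rw [show 1 - (1 - 2 * p) = p + p by ring]
      exact hQ.add_mem _ hp _ hp
    have h₂ : 1 + (1 - 2 * p) ∈ Q := by
      rw [show 1 + (1 - 2 * p) = (1 - p) + (1 - p) by ring]
      exact hQ.add_mem _ hp' _ hp'
    have key : (2 ^ (0 + 2) : ℝ) • (p * q) + 1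
        = (4 : ℝ) • (p ^ 2 * q) + (q + ((1 - (1 - 2 * p) ^ 2) + (1 - 2 * p) ^ 2 * (1 - q))) := by
      simp only [Algebra.smul_def, map_pow, map_ofNat]
      ring
    rw [key]
    exact hQ.add_mem _ (hQ.smul_mem _ (by norm_num) _ (hQ.sq_mul_mem _ _ hq)) _
      (hQ.add_mem _ hq _ (hQ.add_mem _ (hQ.one_sub_sq_mem h₁ h₂) _ (hQ.sq_mul_mem _ _ hq')))
  | succ n ih =>
    obtain ⟨hu, hu'⟩ := hQ.two_mul_mul_one_sub_mem hp hp'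
    have key : (2 ^ (n + 1 + 2) : ℝ) • (p * q) + 1
        = (2 ^ (n + 3) : ℝ) • (p ^ 2 * q) + ((2 ^ (n + 2) : ℝ) • (2 * (p * (1 - p)) * q) + 1) := by
      simp only [Algebra.smul_def, map_pow, map_ofNat]
      ring
    rw [key]
    exact hQ.add_mem _ (hQ.smul_mem _ (by positivity) _ (hQ.sq_mul_mem _ _ hq)) _ (ih hu hu')

theorem mul_add_smul_one_mem_of_one_sub_mem (hQ : IsQuadraticModule Q) {p q : A} (hp : p ∈ Q)
    (hp' : 1 - p ∈ Q) (hq : q ∈ Q) (hq' : 1 - q ∈ Q) {ε : ℝ} (hε : 0 < ε) :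
    p * q + ε • (1 : A) ∈ Q := by
  obtain ⟨n, hn⟩ := pow_unbounded_of_one_lt ε⁻¹ (one_lt_two : (1 : ℝ) < 2)
  set N : ℝ := 2 ^ (n + 2)
  have hN : 0 < N := by positivity
  have hNε : N⁻¹ ≤ ε := by
    rw [inv_le_comm₀ hN hε]
    exact hn.le.trans (pow_le_pow_right₀ one_le_two (Nat.le_add_right n 2))
  refine hQ.add_smul_one_mem_of_le ?_ hNε
  have h := hQ.smul_mem N⁻¹ (inv_nonneg.2 hN.le) _ (hQ.pow_smul_mul_add_one_mem n hp hp' hq hq')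
  rwa [smul_add, smul_smul, inv_mul_cancel₀ hN.ne', one_smul] at h

theorem subset_dagger (hQ : IsQuadraticModule Q) : Q ⊆ Q.dagger :=
  fun _ hx _ hε => hQ.add_mem _ hx _ (hQ.smul_one_mem hε.le)

end IsQuadraticModule

theorem Set.dagger_dagger_subset (Q : Set A) : Q.dagger.dagger ⊆ Q.dagger := by
  intro x hx ε hε
  have h := hx (ε / 2) (half_pos hε) (ε / 2) (half_pos hε)
  rwa [add_assoc, ← add_smul, add_halves] at h

namespace IsArchimedeanQuadraticModule

variable {Q : Set A}

theorem exists_inv_smul_mem_and_one_sub_mem (hQ : IsArchimedeanQuadraticModule Q) {p : A}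
    (hp : p ∈ Q) : ∃ l : ℝ, 0 < l ∧ l⁻¹ • p ∈ Q ∧ 1 - l⁻¹ • p ∈ Q := by
  obtain ⟨l, hl, hlp, -⟩ := hQ.archimedean p
  refine ⟨l, hl, hQ.smul_mem _ (inv_nonneg.2 hl.le) _ hp, ?_⟩
  have h := hQ.smul_mem _ (inv_nonneg.2 hl.le) _ hlp
  rwa [smul_sub, smul_smul, inv_mul_cancel₀ hl.ne', one_smul] at h

theorem mul_add_smul_one_mem (hQ : IsArchimedeanQuadraticModule Q) {p q : A} (hp : p ∈ Q)
    (hq : q ∈ Q) {ε : ℝ} (hε : 0 < ε) : p * q + ε • (1 : A) ∈ Q := by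
  obtain ⟨l, hl, hp₁, hp₂⟩ := hQ.exists_inv_smul_mem_and_one_sub_mem hp
  obtain ⟨m, hm, hq₁, hq₂⟩ := hQ.exists_inv_smul_mem_and_one_sub_mem hq
  have hlm : 0 < l * m := mul_pos hl hm
  refine hQ.mem_of_smul_mem (inv_pos.2 hlm) ?_
  have h := hQ.mul_add_smul_one_mem_of_one_sub_mem hp₁ hp₂ hq₁ hq₂ (div_pos hε hlm)
  rw [smul_mul_smul_comm, ← mul_inv] at h
  rwa [smul_add, smul_smul, inv_mul_eq_div]

theorem dagger (hQ : IsArchimedeanQuadraticModule Q) : IsArchimedeanQuadraticModule Q.dagger where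
  one_mem := hQ.subset_dagger hQ.one_mem
  add_mem x hx y hy ε hε := by
    have h := hQ.add_mem _ (hx _ (half_pos hε)) _ (hy _ (half_pos hε))
    rwa [add_add_add_comm, ← add_smul, add_halves] at h
  smul_mem r hr x hx ε hε := by
    rcases hr.eq_or_lt with rfl | hr
    · simpa using hQ.smul_one_mem hε.le
    · have h := hQ.smul_mem r hr.le _ (hx (ε / r) (div_pos hε hr))
      rwa [smul_add, smul_smul, mul_div_cancel₀ _ hr.ne'] at h
  sq_mul_mem a q hq ε hε := by
    obtain ⟨l, hl, hla, -⟩ := hQ.archimedean (a ^ 2)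
    have hδ : 0 < ε / l := div_pos hε hl
    have h := hQ.add_mem _ (hQ.sq_mul_mem a _ (hq _ hδ)) _ (hQ.smul_mem _ hδ.le _ hla)
    convert h using 1
    simp only [mul_add, smul_sub, smul_smul, div_mul_cancel₀ _ hl.ne', mul_smul_comm, mul_one]
    abel
  archimedean a := by
    obtain ⟨l, hl, h₁, h₂⟩ := hQ.archimedean a
    exact ⟨l, hl, hQ.subset_dagger h₁, hQ.subset_dagger h₂⟩

theorem mul_mem_dagger (hQ : IsArchimedeanQuadraticModule Q) {x y : A} (hx : x ∈ Q.dagger)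
    (hy : y ∈ Q.dagger) : x * y ∈ Q.dagger :=
  Q.dagger_dagger_subset fun _ hε => hQ.dagger.mul_add_smul_one_mem hx hy hε

end IsArchimedeanQuadraticModule

end

theorem stmt_8 {A : Type*} [CommRing A] [Algebra ℝ A] (Q : Set A)
    (hone : (1 : A) ∈ Q)
    (hadd : ∀ x ∈ Q, ∀ y ∈ Q, x + y ∈ Q)
    (hsmul : ∀ r : ℝ, 0 ≤ r → ∀ x ∈ Q, r • x ∈ Q)
    (hsq : ∀ a : A, ∀ q ∈ Q, a ^ 2 * q ∈ Q)
    (harch : ∀ a : A, ∃ l : ℝ, 0 < l ∧ l • (1 : A) - a ∈ Q ∧ l • (1 : A) + a ∈ Q) :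
    (∀ p ∈ Q, ∀ q ∈ Q, ∀ ε : ℝ, 0 < ε → p * q + ε • (1 : A) ∈ Q) ∧
    (let Qd : Set A := {a : A | ∀ ε : ℝ, 0 < ε → a + ε • (1 : A) ∈ Q}
     (1 : A) ∈ Qd ∧ (∀ x ∈ Qd, ∀ y ∈ Qd, x + y ∈ Qd) ∧
       (∀ r : ℝ, 0 ≤ r → ∀ x ∈ Qd, r • x ∈ Qd) ∧
       (∀ a : A, ∀ q ∈ Qd, a ^ 2 * q ∈ Qd) ∧
       (∀ x ∈ Qd, ∀ y ∈ Qd, x * y ∈ Qd) ∧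
       (∀ a : A, ∃ l : ℝ, 0 < l ∧ l • (1 : A) - a ∈ Qd ∧ l • (1 : A) + a ∈ Qd)) := by
  have hQ : IsArchimedeanQuadraticModule Q := ⟨⟨hone, hadd, hsmul, hsq⟩, harch⟩
  have hQd := hQ.dagger
  exact ⟨fun p hp q hq ε hε => hQ.mul_add_smul_one_mem hp hq hε, hQd.one_mem, hQd.add_mem,
    hQd.smul_mem, hQd.sq_mul_mem, fun x hx y hy => hQ.mul_mem_dagger hx hy, hQd.archimedean⟩
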